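/- For all integers M, S, a with M + S ≥ 0, one has Σ_{k ∈ ℤ} q^{k² + a·k} [M, a+k]⁺_q [S, k]⁺_q = [M+S, S+a]_q, where the sum has only finitely many nonzero terms and the right-hand side is the usual Gaussian binomial coefficient. -/

import Mathlib

noncomputable section
open LaurentPolynomial

def gaussRec (v : LaurentPolynomial ℤ) : ℕ → ℕ → LaurentPolynomial ℤ
  | 0, 0 => 1
  | 0, _ + 1 => 0
  | _ + 1, 0 => 1
  | n + 1, m + 1 => gaussRec v n (m + 1) * v ^ (m + 1) + gaussRec v n m

/-- `[n m]_v` for integer indices: the Gaussian binomial in the variable `v`,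
zero unless `0 ≤ m ≤ n`. -/
def gaussZ (v : LaurentPolynomial ℤ) (n m : ℤ) : LaurentPolynomial ℤ :=
  if 0 ≤ m ∧ m ≤ n then gaussRec v n.toNat m.toNat else 0

/-- The Gaussian binomial coefficient `[n m]_q` as a Laurent polynomial in `q = T 1`. -/
def qbin (n m : ℤ) : LaurentPolynomial ℤ := gaussZ (T 1) n m

/-- The extended q-binomial coefficient `[n m]⁺_q ∈ ℤ[q,q⁻¹]`. -/
def qbinPlus (n m : ℤ) : LaurentPolynomial ℤ :=
  if 0 ≤ n then qbin n m
  else (-1) ^ (n - m).natAbs * T (-(((n - m) ^ 2 + (n - m)) / 2)) *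
    gaussZ (T (-1)) (-m - 1) (-n - 1)

/-!
The extended coefficients satisfy the Pascal rule `[n, m]⁺ = q^m [n-1, m]⁺ + [n-1, m-1]⁺` for
all integers `n, m`: for `n < 0` it is the Pascal rule of `[-m-1, -n-1]_{q⁻¹}` in its second
index, and `n = 0` is checked by hand. Expanding `[M, a+k]⁺` in the sum for `(M, S, a)`, and
`[S+1, k]⁺` in the sum for `(M-1, S+1, a-1)`, gives the same two series up to the shift
`k ↦ k+1` in one of them; so the sum is invariant under `(M, S, a) ↦ (M-1, S+1, a-1)` as long as
the series are finite, which `M + S ≥ 0` guarantees. Moving `S` to `0` leaves `[M+S, S+a]⁺`, an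
ordinary Gaussian binomial.
-/

section Gauss

variable (v : LaurentPolynomial ℤ)

lemma gaussRec_eq_zero_of_lt : ∀ {n m : ℕ}, n < m → gaussRec v n m = 0
  | 0, _ + 1, _ => rfl
  | n + 1, m + 1, h => by
      rw [gaussRec, gaussRec_eq_zero_of_lt (by omega), gaussRec_eq_zero_of_lt (by omega),
        zero_mul, zero_add]

lemma gaussZ_of_nonneg {n m : ℤ} (hn : 0 ≤ n) (hm : 0 ≤ m) :
    gaussZ v n m = gaussRec v n.toNat m.toNat := by
  unfold gaussZ
  split_ifs
  · rfl
  · exact (gaussRec_eq_zero_of_lt v (by omega)).symm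

lemma gaussZ_eq_zero {n m : ℤ} (h : m < 0 ∨ n < m) : gaussZ v n m = 0 :=
  if_neg (by omega)

lemma gaussZ_zero_right {n : ℤ} (hn : 0 ≤ n) : gaussZ v n 0 = 1 := by
  rw [gaussZ_of_nonneg v hn le_rfl]
  cases n.toNat <;> rfl

end Gauss

lemma gaussZ_T_succ_succ (e N K : ℤ) (h : N ≠ -1 ∨ K ≠ -1) :
    gaussZ (T e) (N + 1) (K + 1) = gaussZ (T e) N (K + 1) * T (e * (K + 1)) + gaussZ (T e) N K := by
  rcases lt_or_ge K (-1) with hK | hK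
  · simp only [gaussZ_eq_zero _ (Or.inl (by omega : K + 1 < 0)),
      gaussZ_eq_zero _ (Or.inl (by omega : K < 0)), zero_mul, add_zero]
  rcases lt_or_ge N 0 with hN | hN
  · have hNK : N < K := by omega
    simp only [gaussZ_eq_zero _ (Or.inr (by omega : N + 1 < K + 1)),
      gaussZ_eq_zero _ (Or.inr (by omega : N < K + 1)), gaussZ_eq_zero _ (Or.inr hNK),
      zero_mul, add_zero]
  rcases eq_or_lt_of_le hK with rfl | hK
  · rw [neg_add_cancel, gaussZ_zero_right _ (by omega), gaussZ_zero_right _ hN,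
      gaussZ_eq_zero _ (Or.inl (by norm_num)), mul_zero, T_zero]
    ring
  · rw [gaussZ_of_nonneg _ (by omega) (by omega), gaussZ_of_nonneg _ hN (by omega),
      gaussZ_of_nonneg _ hN (by omega), show (N + 1).toNat = N.toNat + 1 by omega,
      show (K + 1).toNat = K.toNat + 1 by omega, gaussRec, T_pow]
    congr 3
    push_cast
    rw [Int.toNat_of_nonneg (by omega)]
    ring

def qbinPlusFactor (d : ℤ) : LaurentPolynomial ℤ :=
  (-1) ^ d.natAbs * T (-((d ^ 2 + d) / 2))

lemma qbinPlusFactor_sub_one (d : ℤ) :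
    qbinPlusFactor (d - 1) = -(qbinPlusFactor d * T d) := by
  have hsign : ((-1 : LaurentPolynomial ℤ)) ^ (d - 1).natAbs = -(-1) ^ d.natAbs := by
    rcases Int.even_or_odd d with h | h <;>
      simp [Odd.neg_one_pow, Int.natAbs_even, Int.natAbs_odd, h, h.sub_odd odd_one]
  have hexp : -(((d - 1) ^ 2 + (d - 1)) / 2) = -((d ^ 2 + d) / 2) + d := by
    have h : (d ^ 2 + d) / 2 = ((d - 1) ^ 2 + (d - 1)) / 2 + d := by
      rw [← Int.add_mul_ediv_right _ _ two_ne_zero]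
      ring_nf
    omega
  rw [qbinPlusFactor, qbinPlusFactor, hsign, hexp, T_add]
  ring

lemma qbinPlus_of_nonneg {n : ℤ} (hn : 0 ≤ n) (m : ℤ) : qbinPlus n m = qbin n m :=
  if_pos hn

lemma qbinPlus_of_neg {n : ℤ} (hn : n < 0) (m : ℤ) :
    qbinPlus n m = qbinPlusFactor (n - m) * gaussZ (T (-1)) (-m - 1) (-n - 1) :=
  if_neg (not_le.2 hn)

lemma qbinPlus_eq_zero {n m : ℤ} (hn : 0 ≤ n) (hm : m < 0 ∨ n < m) : qbinPlus n m = 0 := by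
  rw [qbinPlus_of_nonneg hn, qbin, gaussZ_eq_zero _ hm]

lemma qbinPlus_pascal (n m : ℤ) :
    qbinPlus n m = T m * qbinPlus (n - 1) m + qbinPlus (n - 1) (m - 1) := by
  rcases lt_trichotomy n 0 with hn | rfl | hn
  · have h := gaussZ_T_succ_succ (-1) (-m - 1) (-n - 1) (Or.inr (by omega))
    rw [show -m - 1 + 1 = -m by ring, show -n - 1 + 1 = -n by ring,
      show -1 * -n = m + (n - m) by ring, T_add] at h
    rw [qbinPlus_of_neg hn, qbinPlus_of_neg (by omega), qbinPlus_of_neg (by omega),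
      show n - 1 - m = n - m - 1 by ring, show n - 1 - (m - 1) = n - m by ring,
      show -(n - 1) - 1 = -n by ring, show -(m - 1) - 1 = -m by ring, h, qbinPlusFactor_sub_one]
    ring
  · rw [qbinPlus_of_nonneg le_rfl, qbin, zero_sub, qbinPlus_of_neg (by norm_num),
      qbinPlus_of_neg (by norm_num), neg_neg, sub_self]
    rcases lt_trichotomy m 0 with hm | rfl | hm
    · rw [gaussZ_eq_zero _ (Or.inl hm), gaussZ_zero_right _ (by omega),
        gaussZ_zero_right _ (by omega), show -1 - m = -m - 1 by ring, show -1 - (m - 1) = -m by ring,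
        qbinPlusFactor_sub_one]
      have hT : (T m * T (-m) : LaurentPolynomial ℤ) = 1 := by rw [← T_add, add_neg_cancel, T_zero]
      linear_combination qbinPlusFactor (-m) * hT
    · norm_num [gaussZ_zero_right, gaussZ_eq_zero, qbinPlusFactor]
    · rw [gaussZ_eq_zero _ (Or.inr hm), gaussZ_eq_zero _ (Or.inr (by omega)),
        gaussZ_eq_zero _ (Or.inr (by omega))]
      ring
  · have h := gaussZ_T_succ_succ 1 (n - 1) (m - 1) (Or.inl (by omega))
    rw [sub_add_cancel, sub_add_cancel, one_mul] at h
    rw [qbinPlus_of_nonneg hn.le, qbinPlus_of_nonneg (by omega), qbinPlus_of_nonneg (by omega),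
      qbin, qbin, qbin, h]
    ring

lemma finite_support_mul_qbinPlus_mul_qbinPlus {M S : ℤ} (h : 0 ≤ M ∨ 0 ≤ S)
    (t : ℤ → LaurentPolynomial ℤ) (b : ℤ) :
    (Function.support fun k : ℤ => t k * qbinPlus M (b + k) * qbinPlus S k).Finite := by
  rcases h with hM | hS
  · refine (Set.finite_Icc (-b) (M - b)).subset fun k hk => ?_
    have hk : qbinPlus M (b + k) ≠ 0 := right_ne_zero_of_mul (left_ne_zero_of_mul hk)
    have := mt (qbinPlus_eq_zero hM) hk
    exact Set.mem_Icc.2 ⟨by omega, by omega⟩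
  · refine (Set.finite_Icc 0 S).subset fun k hk => ?_
    have := mt (qbinPlus_eq_zero hS) (right_ne_zero_of_mul hk)
    exact Set.mem_Icc.2 ⟨by omega, by omega⟩

lemma finsum_add_comp_sub_one {R : Type*} [AddCommMonoid R] {f g : ℤ → R}
    (hf : (Function.support f).Finite) (hg : (Function.support g).Finite) :
    ∑ᶠ k : ℤ, (f k + g (k - 1)) = ∑ᶠ k : ℤ, (f k + g k) := by
  have hg' : (Function.support fun k => g (k - 1)).Finite :=
    hg.preimage (sub_left_injective.injOn)
  rw [finsum_add_distrib hf hg', finsum_add_distrib hf hg]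
  exact congrArg _ (finsum_comp_equiv (Equiv.subRight (1 : ℤ)))

def knuthSum (M S a : ℤ) : LaurentPolynomial ℤ :=
  ∑ᶠ k : ℤ, T (k ^ 2 + a * k) * qbinPlus M (a + k) * qbinPlus S k

lemma knuthSum_zero_middle (M a : ℤ) : knuthSum M 0 a = qbinPlus M a := by
  rw [knuthSum, finsum_eq_single _ 0 fun k hk => by
    rw [qbinPlus_eq_zero le_rfl (by omega), mul_zero]]
  simp [qbinPlus_of_nonneg, qbin, gaussZ_zero_right]

lemma knuthSum_eq_knuthSum_sub_one_add_one {M S : ℤ} (h : 0 ≤ M - 1 ∨ 0 ≤ S) (a : ℤ) :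
    knuthSum M S a = knuthSum (M - 1) (S + 1) (a - 1) := by
  set X : ℤ → LaurentPolynomial ℤ := fun k =>
    T (k ^ 2 + a * k) * qbinPlus (M - 1) (a - 1 + k) * qbinPlus S k
  set Y : ℤ → LaurentPolynomial ℤ := fun k =>
    T (k ^ 2 + a * k + (a + k)) * qbinPlus (M - 1) (a + k) * qbinPlus S k
  have hX : (Function.support X).Finite := finite_support_mul_qbinPlus_mul_qbinPlus h _ _
  have hY : (Function.support Y).Finite := finite_support_mul_qbinPlus_mul_qbinPlus h _ _
  have expand_M : ∀ k, T (k ^ 2 + a * k) * qbinPlus M (a + k) * qbinPlus S k = X k + Y k := by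
    intro k
    simp only [X, Y]
    rw [qbinPlus_pascal M, show a + k - 1 = a - 1 + k by ring, T_add (k ^ 2 + a * k)]
    ring
  have expand_S : ∀ k, T (k ^ 2 + (a - 1) * k) * qbinPlus (M - 1) (a - 1 + k) *
      qbinPlus (S + 1) k = X k + Y (k - 1) := by
    intro k
    simp only [X, Y]
    rw [qbinPlus_pascal (S + 1), add_sub_cancel_right, show a + (k - 1) = a - 1 + k by ring,
      show (k - 1) ^ 2 + a * (k - 1) + (a - 1 + k) = k ^ 2 + (a - 1) * k by ring,
      show k ^ 2 + a * k = k ^ 2 + (a - 1) * k + k by ring, T_add (k ^ 2 + (a - 1) * k)]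
    ring
  simp only [knuthSum, expand_M, expand_S]
  exact (finsum_add_comp_sub_one hX hY).symm

lemma knuthSum_eq_qbin {M S : ℤ} (h : 0 ≤ M + S) (a : ℤ) :
    knuthSum M S a = qbin (M + S) (S + a) := by
  induction S using Int.induction_on generalizing M a with
  | zero => rw [knuthSum_zero_middle, qbinPlus_of_nonneg (by omega), add_zero, zero_add]
  | succ i ih =>
    have := knuthSum_eq_knuthSum_sub_one_add_one (M := M + 1) (S := i) (Or.inr (by omega)) (a + 1)
    rw [add_sub_cancel_right, add_sub_cancel_right] at this
    rw [← this, ih (by omega), show M + 1 + i = M + (i + 1) by ring,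
      show (i : ℤ) + (a + 1) = i + 1 + a by ring]
  | pred i ih =>
    rw [knuthSum_eq_knuthSum_sub_one_add_one (Or.inl (by omega)), sub_add_cancel, ih (by omega),
      show M - 1 + -(i : ℤ) = M + (-i - 1) by ring, show -(i : ℤ) + (a - 1) = -i - 1 + a by ring]

/-- the Knuth-type identity, with ordinary Gaussian binomial on the right. -/
theorem qbinPlus_knuth (M S a : ℤ) (h : 0 ≤ M + S) :
    (Function.support (fun k : ℤ =>
        T (k ^ 2 + a * k) * qbinPlus M (a + k) * qbinPlus S k)).Finite ∧
    (∑ᶠ k : ℤ, T (k ^ 2 + a * k) * qbinPlus M (a + k) * qbinPlus S k) =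
      qbin (M + S) (S + a) :=
  ⟨finite_support_mul_qbinPlus_mul_qbinPlus (by omega) _ a, knuthSum_eq_qbin h a⟩

end
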